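/- arXiv:2505.09035 — 2 statements merged into one kernel-verified Lean document; each statement's English description precedes it below -/
import Mathlib

section
/- Let u(r) = (1+r²)^{-(α-2m+1)/2} with α-2m+1 > 0. Then the m-th iterate of the operator -Δ_α applied to u satisfies (-Δ_α)^m u (r) = P · (1+r²)^{-(α+2m+1)/2}, where P = ∏_{h=-m}^{m-1} (α+1+2h). -/
/-- The α-generalized radial Laplacian: Δ_α v(r) = v''(r) + (α/r) v'(r). -/
noncomputable def lapl (α : ℝ) (v : ℝ → ℝ) : ℝ → ℝ :=
  fun r => deriv (deriv v) r + (α / r) * deriv v r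

/-- The m-fold iterate of -Δ_α. -/
noncomputable def negLaplIter (α : ℝ) (m : ℕ) : (ℝ → ℝ) → (ℝ → ℝ) :=
  (fun v r => -(lapl α v r))^[m]

noncomputable def cf (α : ℝ) (m k i : ℕ) : ℝ :=
  (k.choose i : ℝ) * (∏ j ∈ Finset.Ico i k, (2*((m:ℝ)-1-(j:ℝ)))) *
    (∏ j ∈ Finset.range (k+i), (α - (2*(m:ℝ)-1) + 2*(j:ℝ)))

noncomputable def ee (α : ℝ) (m k i : ℕ) : ℝ :=
  -((α - 2*(m:ℝ) + 1)/2) - (k:ℝ) - (i:ℝ)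

noncomputable def Af (α : ℝ) (m k i : ℕ) : ℝ :=
  -(4*(ee α m k i)*(ee α m k i - 1) + 2*(ee α m k i)*(1+α))

noncomputable def Bf (α : ℝ) (m k i : ℕ) : ℝ :=
  4*(ee α m k i)*(ee α m k i - 1)

lemma cf_top_zero (α : ℝ) (m k : ℕ) : cf α m k (k+1) = 0 := by
  simp [cf, Nat.choose_succ_self]

lemma cf_rec0 (α : ℝ) (m k : ℕ) : cf α m (k+1) 0 = Af α m k 0 * cf α m k 0 := by
  unfold cf Af ee
  simp only [Nat.add_zero, Nat.choose_zero_right]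
  rw [Finset.prod_range_succ, Finset.prod_Ico_succ_top (Nat.zero_le k)]
  push_cast
  ring

lemma choose_id (k i : ℕ) (h : i < k) :
    ((k.choose (i+1) : ℝ)) * ((i:ℝ)+1) = (k.choose i : ℝ) * ((k:ℝ) - (i:ℝ)) := by
  have := Nat.choose_succ_right_eq k i
  have h2 : ((k.choose (i+1) * (i+1) : ℕ) : ℝ) = ((k.choose i * (k - i) : ℕ) : ℝ) := by
    exact_mod_cast congrArg (Nat.cast (R := ℝ)) this
  push_cast [Nat.cast_sub h.le] at h2
  linarith [h2]

lemma cf_rec1 (α : ℝ) (m k i : ℕ) (h : i ≤ k) :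
    cf α m (k+1) (i+1) = Af α m k (i+1) * cf α m k (i+1) + Bf α m k i * cf α m k i := by
  rcases lt_or_eq_of_le h with hlt | rfl
  · unfold cf Af Bf ee
    have e1 : k+1+(i+1) = (k+i)+1+1 := by omega
    have e2 : k+(i+1) = (k+i)+1 := by omega
    rw [e1, e2, Finset.prod_range_succ, Finset.prod_range_succ,
      Finset.prod_Ico_succ_top (by omega : i+1 ≤ k),
      Finset.prod_eq_prod_Ico_succ_bot hlt]
    have hp : ((k+1).choose (i+1) : ℝ) = (k.choose i : ℝ) + (k.choose (i+1) : ℝ) := by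
      rw [Nat.choose_succ_succ]; push_cast; ring
    have hc := choose_id k i hlt
    push_cast
    linear_combination ((∏ j ∈ Finset.Ico (i+1) k, (2*((m:ℝ)-1-(j:ℝ)))) *
      (∏ j ∈ Finset.range (k+i), (α - (2*(m:ℝ)-1) + 2*(j:ℝ))) *
      (α - (2*(m:ℝ)-1) + 2*((k:ℝ)+(i:ℝ))) * (α - (2*(m:ℝ)-1) + 2*((k:ℝ)+(i:ℝ)+1))) *
        (2 * hc) +
      ((∏ j ∈ Finset.Ico (i+1) k, (2*((m:ℝ)-1-(j:ℝ)))) *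
      (∏ j ∈ Finset.range (k+i), (α - (2*(m:ℝ)-1) + 2*(j:ℝ))) *
      (α - (2*(m:ℝ)-1) + 2*((k:ℝ)+(i:ℝ))) * (α - (2*(m:ℝ)-1) + 2*((k:ℝ)+(i:ℝ)+1)) *
      (2*((m:ℝ)-1-(k:ℝ)))) * hp
  · rw [cf_top_zero, mul_zero, zero_add]
    unfold cf Bf ee
    have e1 : i+1+(i+1) = (i+i)+1+1 := by omega
    rw [e1, Finset.prod_range_succ, Finset.prod_range_succ]
    simp only [Finset.Ico_self, Finset.prod_empty, Nat.choose_self]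
    push_cast
    ring

lemma hasDerivAt_base (p : ℝ) (r : ℝ) :
    HasDerivAt (fun x : ℝ => (1+x^2) ^ p) (p * (1+r^2)^(p-1) * (2*r)) r := by
  have h1 : HasDerivAt (fun x : ℝ => 1+x^2) (2*r) r := by
    simpa using (hasDerivAt_pow 2 r).const_add 1
  have h0 : (1:ℝ) + r^2 ≠ 0 := by positivity
  have h2 := h1.rpow_const (p := p) (Or.inl h0)
  convert h2 using 1
  ring

lemma neg_lapl_sum (α : ℝ) (n : ℕ) (c e : ℕ → ℝ) (r : ℝ) (hr : r ≠ 0) :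
    -(lapl α (fun x : ℝ => ∑ i ∈ Finset.range n, c i * (1+x^2) ^ (e i)) r)
    = ∑ i ∈ Finset.range n, c i *
        ((-(4*(e i)*(e i - 1) + 2*(e i)*(1+α))) * (1+r^2) ^ (e i - 1)
          + (4*(e i)*(e i - 1)) * (1+r^2) ^ (e i - 2)) := by
  have hd1 : ∀ x : ℝ, HasDerivAt (fun x : ℝ => ∑ i ∈ Finset.range n, c i * (1+x^2) ^ (e i))
      (∑ i ∈ Finset.range n, c i * (e i * (1+x^2)^(e i - 1) * (2*x))) x := fun x =>
    HasDerivAt.fun_sum (fun i _ => ((hasDerivAt_base (e i) x).const_mul (c i)))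
  have hdf : deriv (fun x : ℝ => ∑ i ∈ Finset.range n, c i * (1+x^2) ^ (e i))
      = fun x => ∑ i ∈ Finset.range n, c i * (e i * (1+x^2)^(e i - 1) * (2*x)) :=
    funext fun x => (hd1 x).deriv
  have hd2 : HasDerivAt (fun x : ℝ => ∑ i ∈ Finset.range n, c i * (e i * (1+x^2)^(e i - 1) * (2*x)))
      (∑ i ∈ Finset.range n, c i * ((e i * ((e i - 1) * (1+r^2)^(e i - 1 - 1) * (2*r))) * (2*r)
        + (e i * (1+r^2)^(e i - 1)) * 2)) r := by
    refine HasDerivAt.fun_sum (fun i _ => ?_)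
    have hA : HasDerivAt (fun x : ℝ => e i * (1+x^2)^(e i - 1))
        (e i * ((e i - 1) * (1+r^2)^(e i - 1 - 1) * (2*r))) r :=
      (hasDerivAt_base (e i - 1) r).const_mul (e i)
    have hB : HasDerivAt (fun x : ℝ => 2*x) 2 r := by
      simpa using (hasDerivAt_id r).const_mul (2:ℝ)
    exact (hA.mul hB).const_mul (c i)
  unfold lapl
  rw [hdf, hd2.deriv, Finset.mul_sum, ← Finset.sum_add_distrib, ← Finset.sum_neg_distrib]
  refine Finset.sum_congr rfl (fun i _ => ?_)
  have hpos : (0:ℝ) < 1 + r^2 := by positivity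
  have h11 : e i - 1 - 1 = e i - 2 := by ring
  have h21 : (1+r^2) ^ (e i - 1) = (1+r^2)^(e i - 2) * (1+r^2) := by
    rw [show e i - 1 = (e i - 2) + 1 by ring, Real.rpow_add_one (ne_of_gt hpos)]
  rw [h11, h21]
  field_simp
  ring

lemma step_sum (α : ℝ) (m k : ℕ) (X : ℕ → ℝ) :
    ∑ i ∈ Finset.range (k+1), cf α m k i * (Af α m k i * X i + Bf α m k i * X (i+1))
    = ∑ i ∈ Finset.range (k+1+1), cf α m (k+1) i * X i := by
  have hterm : ∀ i ∈ Finset.range (k+1), cf α m (k+1) (i+1) * X (i+1)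
      = cf α m k (i+1) * (Af α m k (i+1) * X (i+1)) + cf α m k i * (Bf α m k i * X (i+1)) := by
    intro i hi
    rw [cf_rec1 α m k i (by simpa using Nat.lt_succ_iff.mp (Finset.mem_range.mp hi))]
    ring
  have hA : ∑ i ∈ Finset.range (k+1), cf α m k i * (Af α m k i * X i)
      = (∑ i ∈ Finset.range (k+1), cf α m k (i+1) * (Af α m k (i+1) * X (i+1)))
        + cf α m k 0 * (Af α m k 0 * X 0) := by
    rw [Finset.sum_range_succ (fun i => cf α m k (i+1) * (Af α m k (i+1) * X (i+1))) k,
      cf_top_zero, Finset.sum_range_succ' (fun i => cf α m k i * (Af α m k i * X i)) k]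
    ring
  rw [Finset.sum_range_succ' (fun i => cf α m (k+1) i * X i) (k+1),
    Finset.sum_congr rfl hterm, Finset.sum_add_distrib, cf_rec0]
  simp only [mul_add]
  rw [Finset.sum_add_distrib, hA]
  ring

lemma iter_formula (α : ℝ) (m : ℕ) : ∀ k, ∀ r : ℝ, 0 < r →
    negLaplIter α k (fun x : ℝ => (1 + x ^ 2) ^ (-((α - 2 * (m:ℝ) + 1) / 2))) r
      = ∑ i ∈ Finset.range (k+1), cf α m k i * (1 + r ^ 2) ^ (ee α m k i) := by
  intro k
  induction k with
  | zero =>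
    intro r hr
    simp [negLaplIter, cf, ee]
  | succ k ih =>
    intro r hr
    have hne : r ≠ 0 := ne_of_gt hr
    have hstep : negLaplIter α (k+1) (fun x : ℝ => (1 + x ^ 2) ^ (-((α - 2 * (m:ℝ) + 1) / 2)))
        = fun r => -(lapl α
            (negLaplIter α k (fun x : ℝ => (1 + x ^ 2) ^ (-((α - 2 * (m:ℝ) + 1) / 2)))) r) := by
      simp only [negLaplIter, Function.iterate_succ_apply']
    rw [hstep]
    have hev : negLaplIter α k (fun x : ℝ => (1 + x ^ 2) ^ (-((α - 2 * (m:ℝ) + 1) / 2)))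
        =ᶠ[nhds r] (fun x : ℝ => ∑ i ∈ Finset.range (k+1), cf α m k i * (1 + x ^ 2) ^ (ee α m k i)) :=
      Filter.eventuallyEq_of_mem (Ioi_mem_nhds hr) (fun x hx => ih x hx)
    have hlapl : lapl α (negLaplIter α k (fun x : ℝ => (1 + x ^ 2) ^ (-((α - 2 * (m:ℝ) + 1) / 2)))) r
        = lapl α (fun x : ℝ => ∑ i ∈ Finset.range (k+1), cf α m k i * (1 + x ^ 2) ^ (ee α m k i)) r := by
      unfold lapl
      rw [hev.deriv_eq, (hev.deriv).deriv_eq]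
    show -(lapl α _ r) = _
    rw [hlapl, neg_lapl_sum α (k+1) (cf α m k) (ee α m k) r hne]
    have he1 : ∀ i : ℕ, ee α m k i - 1 = ee α m (k+1) i := by
      intro i; unfold ee; push_cast; ring
    have he2 : ∀ i : ℕ, ee α m k i - 2 = ee α m (k+1) (i+1) := by
      intro i; unfold ee; push_cast; ring
    simp only [he1, he2]
    have := step_sum α m k (fun j => (1 + r ^ 2) ^ (ee α m (k+1) j))
    simp only [Af, Bf] at this
    simp only [he1, he2] at this
    exact this

theorem stmt_2 (m : ℕ) (hm : 1 ≤ m) (α : ℝ) (hα : -1 < α) (hS : α - 2 * m + 1 > 0) :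
    ∀ r : ℝ, 0 < r →
      negLaplIter α m (fun r : ℝ => (1 + r ^ 2) ^ (-((α - 2 * m + 1) / 2))) r =
        (∏ h ∈ Finset.range (2 * m), (α + 1 + 2 * ((h : ℝ) - m))) *
          (1 + r ^ 2) ^ (-((α + 2 * m + 1) / 2)) := by
  intro r hr
  rw [iter_formula α m m r hr]
  rw [Finset.sum_eq_single m]
  · have h1 : cf α m m m = ∏ h ∈ Finset.range (2 * m), (α + 1 + 2 * ((h : ℝ) - m)) := by
      unfold cf
      simp only [Nat.choose_self, Finset.Ico_self, Finset.prod_empty, Nat.cast_one, one_mul,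
        mul_one]
      rw [show m + m = 2 * m by ring]
      exact Finset.prod_congr rfl (fun j _ => by push_cast; ring)
    have h2 : ee α m m m = -((α + 2 * (m:ℝ) + 1) / 2) := by
      unfold ee; ring
    rw [h1, h2]
  · intro b hb hbm
    have hblt : b < m := by
      have := Finset.mem_range.mp hb; omega
    have hmem : m - 1 ∈ Finset.Ico b m := Finset.mem_Ico.mpr ⟨by omega, by omega⟩
    have hz : (2*((m:ℝ)-1-((m-1:ℕ):ℝ))) = 0 := by
      rw [Nat.cast_sub hm]; push_cast; ring
    have : (∏ j ∈ Finset.Ico b m, (2*((m:ℝ)-1-(j:ℝ)))) = 0 :=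
      Finset.prod_eq_zero hmem hz
    unfold cf
    rw [this]
    ring
  · intro h
    exact absurd (Finset.self_mem_range_succ m) h
end

section
/- Let w₀ : (0,∞) → ℝ be measurable with |∫₀^t w₀(s) s^α ds| ≤ C t^{(α-2m+1)/2} for all t > 0. Define iteratively w_k(r) = ∫_r^∞ t^{-α} ( ∫₀^t s^α w_{k-1}(s) ds ) dt for 1 ≤ k ≤ m. Then |w_k(r)| ≤ C' r^{-(α+2m+1-4k)/2} and |w_k'(r)| ≤ C' r^{-(α+2m+3-4k)/2} for all r > 0 and some constant C' depending on C, α, m. -/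
/-!
A step `w ↦ ∫_r^∞ t^{-α} ∫_0^t s^α w(s) ds dt` turns a bound `D t^β` on the inner primitive
into the bound `D' r^{β-α+1}` on the new function; feeding that into the next primitive gives
`D'' t^{β+2}`. Starting from `β = (α - 2m + 1)/2`, the exponents stay in the range where all
these power integrals converge as long as `k ≤ m`.

The derivative bound comes from slopes alone:
`|w_{k+1}(y) - w_{k+1}(r)| ≤ ∫_r^y D t^{β-α} dt ≤ D r^{β-α} (y - r)` for `y > r`, so no continuity
of the integrand is needed, only its measurability. And `t ↦ ∫_0^t f` is measurable for every `f`: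
it is continuous on the initial segment of those `t` for which `f` is integrable on `(0, t)` and
vanishes (as a junk value) elsewhere.
-/

open MeasureTheory

/-- The iterated functions w_k:
w_0 = w0, w_{k+1}(r) = ∫_r^∞ t^{-α} ( ∫_0^t s^α w_k(s) ds ) dt. -/
noncomputable def iterW (α : ℝ) (w0 : ℝ → ℝ) : ℕ → ℝ → ℝ
  | 0 => w0
  | (k + 1) => fun r =>
      ∫ t in Set.Ioi r, t ^ (-α) * ∫ s in Set.Ioo (0 : ℝ) t, s ^ α * iterW α w0 k s

open Set Filter Topology

section

variable {E : Type*} [NormedAddCommGroup E] [NormedSpace ℝ E] [MeasurableSpace E] [BorelSpace E]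
  {μ : Measure ℝ} [NullSingletonClass μ]

theorem measurable_integral_Iio (f : ℝ → E) : Measurable fun t => ∫ x in Iio t, f x ∂μ := by
  classical
  set G := {t : ℝ | IntegrableOn f (Iio t) μ}
  have hG : MeasurableSet G :=
    OrdConnected.measurableSet ⟨fun _ _ _ hy _ hz => hy.mono_set (Iio_subset_Iio hz.2)⟩
  have hcont : ContinuousOn (fun t => ∫ x in Iio t, f x ∂μ) G := by
    intro t ht
    by_cases h : ∃ u ∈ G, t < u
    · obtain ⟨u, hu, htu⟩ := h
      exact ((IntegrableOn.continuousOn_Iic_primitive_Iio hu).continuousAt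
        (Iic_mem_nhds htu)).continuousWithinAt
    · simp only [not_exists, not_and, not_lt] at h
      exact (IntegrableOn.continuousOn_Iic_primitive_Iio ht t self_mem_Iic).mono h
  have hpiece :
      (fun t => ∫ x in Iio t, f x ∂μ) = G.piecewise (fun t => ∫ x in Iio t, f x ∂μ) 0 := by
    ext t
    by_cases ht : t ∈ G
    · simp [ht]
    · simp [ht, integral_undef ht]
  rw [hpiece]
  exact hcont.measurable_piecewise continuousOn_const hG

theorem measurable_integral_Ioo (f : ℝ → E) (a : ℝ) :
    Measurable fun t => ∫ x in Ioo a t, f x ∂μ := by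
  have h : ∀ t, ∫ x in Ioo a t, f x ∂μ = ∫ x in Iio t, (Ioi a).indicator f x ∂μ := fun t => by
    rw [integral_indicator measurableSet_Ioi, Measure.restrict_restrict measurableSet_Ioi,
      Ioi_inter_Iio]
  simpa only [h] using measurable_integral_Iio ((Ioi a).indicator f)

end

theorem abs_deriv_le_of_abs_sub_le {f : ℝ → ℝ} {x c : ℝ}
    (h : ∀ y, x < y → |f y - f x| ≤ c * (y - x)) : |deriv f x| ≤ c := by
  by_cases hd : DifferentiableAt ℝ f x
  · have hslope : Tendsto (slope f x) (𝓝[>] x) (𝓝 (deriv f x)) :=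
      (hasDerivWithinAt_iff_tendsto_slope' (lt_irrefl x)).1 hd.hasDerivAt.hasDerivWithinAt
    refine le_of_tendsto hslope.abs (eventually_nhdsWithin_of_forall fun y (hy : x < y) => ?_)
    rw [slope_def_field, abs_div, abs_of_pos (sub_pos.2 hy), div_le_iff₀ (sub_pos.2 hy)]
    exact h y hy
  · rw [deriv_zero_of_not_differentiableAt hd, abs_zero]
    simpa using (abs_nonneg _).trans (h (x + 1) (lt_add_one x))

theorem abs_rpow_mul_le {s a D γ w : ℝ} (hs : 0 < s) (hw : |w| ≤ D * s ^ γ) :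
    |s ^ a * w| ≤ D * s ^ (a + γ) := by
  rw [abs_mul, abs_of_pos (Real.rpow_pos_of_pos hs a), Real.rpow_add hs]
  calc s ^ a * |w| ≤ s ^ a * (D * s ^ γ) := by gcongr
    _ = D * (s ^ a * s ^ γ) := by ring

theorem abs_integral_Ioo_zero_le_of_abs_le_rpow {f : ℝ → ℝ} {D γ t : ℝ} (hγ : -1 < γ)
    (ht : 0 < t) (hf : ∀ s ∈ Ioo 0 t, |f s| ≤ D * s ^ γ) :
    |∫ s in Ioo 0 t, f s| ≤ D / (γ + 1) * t ^ (γ + 1) := by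
  have hint : IntegrableOn (fun s => D * s ^ γ) (Ioo 0 t) :=
    ((intervalIntegrable_iff_integrableOn_Ioo_of_le ht.le).1
      (intervalIntegral.intervalIntegrable_rpow' hγ)).const_mul D
  calc |∫ s in Ioo 0 t, f s| ≤ ∫ s in Ioo 0 t, D * s ^ γ := by
        rw [← Real.norm_eq_abs]
        exact norm_integral_le_of_norm_le hint (ae_restrict_of_forall_mem measurableSet_Ioo hf)
    _ = D / (γ + 1) * t ^ (γ + 1) := by
      rw [integral_const_mul, ← integral_Ioc_eq_integral_Ioo,
        ← intervalIntegral.integral_of_le ht.le, integral_rpow (Or.inl hγ),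
        Real.zero_rpow (by linarith), sub_zero]
      ring

theorem abs_integral_Ioi_le_of_abs_le_rpow {F : ℝ → ℝ} {D γ r : ℝ} (hγ : γ < -1)
    (hr : 0 < r) (hF : ∀ t ∈ Ioi r, |F t| ≤ D * t ^ γ) :
    |∫ t in Ioi r, F t| ≤ -D / (γ + 1) * r ^ (γ + 1) := by
  calc |∫ t in Ioi r, F t| ≤ ∫ t in Ioi r, D * t ^ γ := by
        rw [← Real.norm_eq_abs]
        exact norm_integral_le_of_norm_le ((integrableOn_Ioi_rpow_of_lt hγ hr).const_mul D)
          (ae_restrict_of_forall_mem measurableSet_Ioi hF)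
    _ = -D / (γ + 1) * r ^ (γ + 1) := by
      rw [integral_const_mul, integral_Ioi_rpow_of_lt hγ hr]
      ring

theorem abs_deriv_integral_Ioi_le_of_abs_le_rpow {F : ℝ → ℝ} {D γ r : ℝ} (hγ : γ < -1)
    (hr : 0 < r) (hFm : AEStronglyMeasurable F (volume.restrict (Ioi r)))
    (hF : ∀ t ∈ Ioi r, |F t| ≤ D * t ^ γ) :
    |deriv (fun u => ∫ t in Ioi u, F t) r| ≤ D * r ^ γ := by
  have hint : IntegrableOn F (Ioi r) :=
    ((integrableOn_Ioi_rpow_of_lt hγ hr).const_mul D).mono' hFm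
      (ae_restrict_of_forall_mem measurableSet_Ioi hF)
  refine abs_deriv_le_of_abs_sub_le fun y hy => ?_
  have hD : 0 ≤ D := nonneg_of_mul_nonneg_left ((abs_nonneg _).trans (hF y hy))
    (Real.rpow_pos_of_pos (hr.trans hy) γ)
  rw [abs_sub_comm, intervalIntegral.integral_Ioi_sub_Ioi hint hy.le, ← abs_of_pos (sub_pos.2 hy)]
  refine intervalIntegral.norm_integral_le_of_norm_le_const (f := F) fun t ht => ?_
  rw [uIoc_of_le hy.le] at ht
  calc |F t| ≤ D * t ^ γ := hF t (Ioc_subset_Ioi_self ht)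
    _ ≤ D * r ^ γ :=
      mul_le_mul_of_nonneg_left (Real.rpow_le_rpow_of_nonpos hr ht.1.le (by linarith)) hD

section IterW

variable {α : ℝ} {w0 : ℝ → ℝ} {k : ℕ} {D β : ℝ}

theorem abs_integrand_iterW_succ_le
    (hg : ∀ t, 0 < t → |∫ s in Ioo 0 t, s ^ α * iterW α w0 k s| ≤ D * t ^ β) {t : ℝ}
    (ht : 0 < t) :
    |t ^ (-α) * ∫ s in Ioo 0 t, s ^ α * iterW α w0 k s| ≤ D * t ^ (β - α) := by
  simpa only [neg_add_eq_sub] using abs_rpow_mul_le (a := -α) ht (hg t ht)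

theorem abs_iterW_succ_le (hβ : β - α < -1)
    (hg : ∀ t, 0 < t → |∫ s in Ioo 0 t, s ^ α * iterW α w0 k s| ≤ D * t ^ β) {r : ℝ}
    (hr : 0 < r) :
    |iterW α w0 (k + 1) r| ≤ -D / (β - α + 1) * r ^ (β - α + 1) :=
  abs_integral_Ioi_le_of_abs_le_rpow hβ hr fun _ ht =>
    abs_integrand_iterW_succ_le hg (hr.trans ht)

theorem abs_deriv_iterW_succ_le (hβ : β - α < -1)
    (hg : ∀ t, 0 < t → |∫ s in Ioo 0 t, s ^ α * iterW α w0 k s| ≤ D * t ^ β) {r : ℝ}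
    (hr : 0 < r) :
    |deriv (iterW α w0 (k + 1)) r| ≤ D * r ^ (β - α) := by
  have hmeas : Measurable fun t : ℝ => t ^ (-α) * ∫ s in Ioo 0 t, s ^ α * iterW α w0 k s :=
    (measurable_id.pow_const (-α)).mul (measurable_integral_Ioo _ 0)
  exact abs_deriv_integral_Ioi_le_of_abs_le_rpow hβ hr hmeas.aestronglyMeasurable
    fun _ ht => abs_integrand_iterW_succ_le hg (hr.trans ht)

theorem exists_abs_integral_iterW_le (hβ : -2 < β)
    (h0 : ∀ t, 0 < t → |∫ s in Ioo 0 t, s ^ α * w0 s| ≤ D * t ^ β) (k : ℕ)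
    (hk : β + 2 * k - 1 < α) :
    ∃ D', ∀ t, 0 < t → |∫ s in Ioo 0 t, s ^ α * iterW α w0 k s| ≤ D' * t ^ (β + 2 * k) := by
  induction k with
  | zero => exact ⟨D, by simpa [iterW] using h0⟩
  | succ k ih =>
    push_cast at hk
    obtain ⟨D', hD'⟩ := ih (by linarith)
    have hβk : β + 2 * k - α < -1 := by linarith
    refine ⟨-D' / (β + 2 * k - α + 1) / (β + 2 * k + 2), fun t ht => ?_⟩
    have h := abs_integral_Ioo_zero_le_of_abs_le_rpow (by linarith) ht
      fun s hs => abs_rpow_mul_le (a := α) hs.1 (abs_iterW_succ_le hβk hD' hs.1)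
    convert h using 3 <;> push_cast <;> ring

theorem eventually_abs_iterW_le {m : ℕ} (hS : α - 2 * m + 1 > 0) {C : ℝ}
    (h0 : ∀ t, 0 < t → |∫ s in Ioo 0 t, s ^ α * w0 s| ≤ C * t ^ ((α - 2 * m + 1) / 2))
    (hk1 : 1 ≤ k) (hkm : k ≤ m) :
    ∀ᶠ C' in atTop, ∀ r : ℝ, 0 < r →
      |iterW α w0 k r| ≤ C' * r ^ (-((α + 2 * m + 1 - 4 * k) / 2)) ∧
      |deriv (iterW α w0 k) r| ≤ C' * r ^ (-((α + 2 * m + 3 - 4 * k) / 2)) := by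
  obtain ⟨j, rfl⟩ := Nat.exists_eq_add_of_le' hk1
  have hj : (j : ℝ) + 1 ≤ m := by exact_mod_cast hkm
  obtain ⟨D, hD⟩ := exists_abs_integral_iterW_le (by linarith) h0 j (by linarith)
  have hβ : (α - 2 * m + 1) / 2 + 2 * j - α < -1 := by linarith
  have e1 : (α - 2 * m + 1) / 2 + 2 * j - α + 1 =
      -((α + 2 * m + 1 - 4 * ((j + 1 : ℕ) : ℝ)) / 2) := by
    push_cast; ring
  have e2 : (α - 2 * m + 1) / 2 + 2 * j - α =
      -((α + 2 * m + 3 - 4 * ((j + 1 : ℕ) : ℝ)) / 2) := by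
    push_cast; ring
  filter_upwards [eventually_ge_atTop (-D / ((α - 2 * m + 1) / 2 + 2 * j - α + 1)),
    eventually_ge_atTop D] with C' hC'₁ hC'₂ r hr
  rw [← e1, ← e2]
  exact ⟨(abs_iterW_succ_le hβ hD hr).trans (by gcongr),
    (abs_deriv_iterW_succ_le hβ hD hr).trans (by gcongr)⟩

end IterW

theorem stmt_8_general (m : ℕ) (α : ℝ) (hS : α - 2 * m + 1 > 0)
    (w0 : ℝ → ℝ) (C : ℝ)
    (hbound : ∀ t : ℝ, 0 < t →
      |∫ s in Set.Ioo (0 : ℝ) t, w0 s * s ^ α| ≤ C * t ^ ((α - 2 * m + 1) / 2)) :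
    ∃ C' : ℝ, ∀ k : ℕ, 1 ≤ k → k ≤ m → ∀ r : ℝ, 0 < r →
      |iterW α w0 k r| ≤ C' * r ^ (-((α + 2 * m + 1 - 4 * k) / 2)) ∧
      |deriv (iterW α w0 k) r| ≤ C' * r ^ (-((α + 2 * m + 3 - 4 * k) / 2)) := by
  have h0 : ∀ t, 0 < t → |∫ s in Ioo 0 t, s ^ α * w0 s| ≤ C * t ^ ((α - 2 * m + 1) / 2) := by
    simpa only [mul_comm _ (w0 _)] using hbound
  obtain ⟨C', hC'⟩ := ((Finset.Icc 1 m).eventually_all.2 fun k hk =>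
    eventually_abs_iterW_le hS h0 (Finset.mem_Icc.1 hk).1 (Finset.mem_Icc.1 hk).2).exists
  exact ⟨C', fun k hk1 hkm => hC' k (Finset.mem_Icc.2 ⟨hk1, hkm⟩)⟩

theorem stmt_8 (m : ℕ) (hm : 1 ≤ m) (α : ℝ) (hα : -1 < α) (hS : α - 2 * m + 1 > 0)
    (w0 : ℝ → ℝ) (hmeas : Measurable w0) (C : ℝ)
    (hbound : ∀ t : ℝ, 0 < t →
      |∫ s in Set.Ioo (0 : ℝ) t, w0 s * s ^ α| ≤ C * t ^ ((α - 2 * m + 1) / 2)) :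
    ∃ C' : ℝ, ∀ k : ℕ, 1 ≤ k → k ≤ m → ∀ r : ℝ, 0 < r →
      |iterW α w0 k r| ≤ C' * r ^ (-((α + 2 * m + 1 - 4 * k) / 2)) ∧
      |deriv (iterW α w0 k) r| ≤ C' * r ^ (-((α + 2 * m + 3 - 4 * k) / 2)) :=
  stmt_8_general m α hS w0 C hbound
end
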